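/- Let ζ ∈ ℂ with |ζ| = 1 and let z ∈ 𝔻. Then the limit of ρ(z, w) − ρ(0, w) as w → ζ with w ∈ 𝔻 exists and equals (1/2)·log(|ζ − z|² / (1 − |z|²)). -/

import Mathlib

open Filter Set

noncomputable section

/-- The inverse hyperbolic tangent: `artanh r = (1/2) log ((1+r)/(1-r))`. -/
def artanh (r : ℝ) : ℝ := (1 / 2) * Real.log ((1 + r) / (1 - r))

/-- The Poincaré (Kobayashi) distance on the unit disc
`ρ(z,w) = artanh |(z - w)/(1 - conj w * z)|`. -/
def pd (z w : ℂ) : ℝ := artanh (‖(z - w) / (1 - (starRingEnd ℂ) w * z)‖)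

/-!
Write `N = |1 - w̄ z|` and `d = |z - w|`. The identity `N² - d² = (1 - |z|²)(1 - |w|²)` turns
`ρ(z, w) = artanh (d / N)` into `½ log ((N + d)² / ((1 - |z|²)(1 - |w|²)))`. In the difference
`ρ(z, w) - ρ(0, w)` the factor `1 - |w|²`, which vanishes on the boundary, cancels, leaving
`½ log ((N + d)² / ((1 - |z|²)(1 + |w|)²))`, continuous up to `|w| = 1`. At `w = ζ` one has
`N = d = |ζ - z|` and `1 + |w| = 2`.
-/

open ComplexConjugate

lemma norm_one_sub_conj_mul_sq_sub_norm_sub_sq (z w : ℂ) :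
    ‖1 - conj w * z‖ ^ 2 - ‖z - w‖ ^ 2 = (1 - ‖z‖ ^ 2) * (1 - ‖w‖ ^ 2) := by
  simp only [Complex.sq_norm, Complex.normSq_apply, Complex.sub_re, Complex.sub_im,
    Complex.mul_re, Complex.mul_im, Complex.one_re, Complex.one_im, Complex.conj_re,
    Complex.conj_im]
  ring

lemma norm_one_sub_conj_mul_of_norm_eq_one {ζ : ℂ} (hζ : ‖ζ‖ = 1) (z : ℂ) :
    ‖1 - conj ζ * z‖ = ‖ζ - z‖ := by
  have hζζ : conj ζ * ζ = 1 := by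
    rw [← Complex.normSq_eq_conj_mul_self, Complex.normSq_eq_norm_sq, hζ]
    norm_num
  rw [← hζζ, ← mul_sub, norm_mul, Complex.norm_conj, hζ, one_mul]

lemma artanh_div {N : ℝ} (hN : N ≠ 0) (d : ℝ) :
    artanh (d / N) = 1 / 2 * Real.log ((N + d) ^ 2 / (N ^ 2 - d ^ 2)) := by
  -- `(N + d) / (N - d) = (N + d)² / (N² - d²)` holds even when `N + d` or `N - d` vanishes
  have hquot : (N + d) / (N - d) = (N + d) ^ 2 / (N ^ 2 - d ^ 2) := by
    rcases eq_or_ne (N + d) 0 with h | h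
    · simp [h]
    · rw [sq, show N ^ 2 - d ^ 2 = (N + d) * (N - d) by ring, mul_div_mul_left _ _ h]
  rw [artanh, ← hquot]
  congr 2
  field_simp

lemma pd_eq_half_log {z w : ℂ} (h : conj w * z ≠ 1) :
    pd z w = 1 / 2 * Real.log
      ((‖1 - conj w * z‖ + ‖z - w‖) ^ 2 / ((1 - ‖z‖ ^ 2) * (1 - ‖w‖ ^ 2))) := by
  rw [pd, norm_div, artanh_div (norm_ne_zero_iff.mpr (sub_ne_zero.mpr h.symm)),
    norm_one_sub_conj_mul_sq_sub_norm_sub_sq]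

lemma pd_sub_pd_zero_eq_half_log {z w : ℂ} (hz : ‖z‖ < 1) (hw : ‖w‖ < 1) :
    pd z w - pd 0 w = 1 / 2 * Real.log
      ((‖1 - conj w * z‖ + ‖z - w‖) ^ 2 / ((1 - ‖z‖ ^ 2) * (1 + ‖w‖) ^ 2)) := by
  have hwz : conj w * z ≠ 1 := fun h => by
    have : ‖w‖ * ‖z‖ < 1 := mul_lt_one_of_nonneg_of_lt_one_left (norm_nonneg w) hw hz.le
    rw [← Complex.norm_conj w, ← norm_mul, h, norm_one] at this
    exact this.false
  have hN : 0 < ‖1 - conj w * z‖ := norm_pos_iff.mpr (sub_ne_zero.mpr hwz.symm)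
  have hz' : 0 < 1 - ‖z‖ ^ 2 := by nlinarith [norm_nonneg z]
  have hw' : 0 < 1 - ‖w‖ ^ 2 := by nlinarith [norm_nonneg w]
  have hpd0 : pd 0 w = 1 / 2 * Real.log ((1 + ‖w‖) ^ 2 / (1 - ‖w‖ ^ 2)) := by
    simpa using pd_eq_half_log (z := 0) (w := w) (by simp)
  rw [pd_eq_half_log hwz, hpd0, ← mul_sub, ← Real.log_div (by positivity) (by positivity)]
  congr 2
  field_simp

theorem tendsto_pd_sub_pd_zero (ζ z : ℂ) (hζ : ‖ζ‖ = 1) (hz : ‖z‖ < 1) :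
    Filter.Tendsto (fun w => pd z w - pd 0 w)
      (nhdsWithin ζ {w : ℂ | ‖w‖ < 1})
      (nhds ((1 / 2) * Real.log ((‖ζ - z‖) ^ 2 / (1 - (‖z‖) ^ 2)))) := by
  have hzζ : ζ - z ≠ 0 := sub_ne_zero.mpr fun h => by rw [h] at hζ; linarith
  have hz' : 0 < 1 - ‖z‖ ^ 2 := by nlinarith [norm_nonneg z]
  have hlimit : (‖1 - conj ζ * z‖ + ‖z - ζ‖) ^ 2 / ((1 - ‖z‖ ^ 2) * (1 + ‖ζ‖) ^ 2)
      = ‖ζ - z‖ ^ 2 / (1 - ‖z‖ ^ 2) := by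
    rw [norm_one_sub_conj_mul_of_norm_eq_one hζ, norm_sub_rev z, hζ]
    field_simp
  have hcont : ContinuousAt (fun w : ℂ => 1 / 2 * Real.log
      ((‖1 - conj w * z‖ + ‖z - w‖) ^ 2 / ((1 - ‖z‖ ^ 2) * (1 + ‖w‖) ^ 2))) ζ := by
    refine continuousAt_const.mul (ContinuousAt.log (by fun_prop (disch := positivity)) ?_)
    rw [hlimit]
    positivity
  rw [← hlimit]
  refine hcont.continuousWithinAt.tendsto.congr' ?_
  filter_upwards [self_mem_nhdsWithin] with w hw
  exact (pd_sub_pd_zero_eq_half_log hz hw).symm
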